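/- For a univariate density μ, smoothing with scale γ > 0: if f is bounded measurable and μ is C¹ with full support, then ∇_γ E_{ε∼μ}[f(x + γε)] = E_{ε∼μ}[f(x + γε)·(−1 + (−log μ)'(ε)·ε)/γ]. -/

import Mathlib

open MeasureTheory Filter Set Topology

lemma cov1 (h : ℝ → ℝ) (x t : ℝ) :
    (∫ ε, h (x + t * ε)) = |t⁻¹| • ∫ u, h u := by
  have h1 := Measure.integral_comp_mul_left (fun v => h (x + v)) t
  rw [h1, integral_add_left_eq_self]

lemma cov2 (h : ℝ → ℝ) (x t : ℝ) :
    (∫ u, h ((u - x) / t)) = |t| • ∫ v, h v := by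
  have h1 := integral_sub_right_eq_self (μ := volume) (fun v => h (v / t)) x
  rw [h1, Measure.integral_comp_div h t]
lemma tail_small (g : ℝ → ℝ) (hi : Integrable g) {δ : ℝ} (hδ : 0 < δ) :
    ∃ R : ℝ, 0 < R ∧ ∫ s in (Metric.closedBall (0:ℝ) R)ᶜ, |g s| < δ := by
  have hmono : Monotone (fun n : ℕ => Metric.closedBall (0:ℝ) n) := by
    intro a b hab
    exact Metric.closedBall_subset_closedBall (by exact_mod_cast hab)
  have hunion : (⋃ n : ℕ, Metric.closedBall (0:ℝ) n) = univ := by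
    ext y; simp only [mem_iUnion, Metric.mem_closedBall, mem_univ, iff_true]
    obtain ⟨n, hn⟩ := exists_nat_ge (dist y 0)
    exact ⟨n, hn⟩
  have htd := MeasureTheory.tendsto_setIntegral_of_monotone
    (fun n : ℕ => measurableSet_closedBall) hmono (by rw [hunion]; exact hi.abs.integrableOn)
  rw [hunion] at htd
  have : ∀ᶠ n : ℕ in atTop, (∫ s, |g s|) - δ < ∫ s in Metric.closedBall (0:ℝ) n, |g s| := by
    apply htd.eventually_const_lt
    simp [hδ]
  obtain ⟨n, hn⟩ := this.exists
  refine ⟨n + 1, by positivity, ?_⟩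
  have hsplit := MeasureTheory.integral_add_compl
    (measurableSet_closedBall (x := (0:ℝ)) (ε := ((n:ℝ)+1))) hi.abs
  have hmono2 : (∫ s in Metric.closedBall (0:ℝ) n, |g s|)
      ≤ ∫ s in Metric.closedBall (0:ℝ) ((n:ℝ)+1), |g s| := by
    apply setIntegral_mono_set hi.abs.integrableOn
    · exact Filter.Eventually.of_forall fun s => abs_nonneg _
    · exact HasSubset.Subset.eventuallyLE
        (Metric.closedBall_subset_closedBall (by linarith))
  have := hsplit
  nlinarith [this, hn, hmono2]
lemma dilation_tendsto (g : ℝ → ℝ) (hc : Continuous g) (hi : Integrable g) :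
    Tendsto (fun c : ℝ => ∫ s, |c * g (c * s) - g s|) (𝓝 1) (𝓝 0) := by
  rw [Metric.tendsto_nhds]
  intro δ hδ
  obtain ⟨R, hR, htail⟩ := tail_small g hi (show (0:ℝ) < δ/8 by linarith)
  set K := Metric.closedBall (0:ℝ) (2*R) with hK
  obtain ⟨M, hM⟩ := (isCompact_closedBall (0:ℝ) (4*R)).exists_bound_of_continuousOn
    hc.continuousOn
  -- compact part
  have hcompact : Tendsto (fun c : ℝ => ∫ s in K, |c * g (c*s) - g s|) (𝓝 1) (𝓝 0) := by
    have h0 : (0:ℝ) = ∫ s in K, (0:ℝ) ∂volume := by simp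
    rw [h0]
    apply tendsto_integral_filter_of_dominated_convergence (fun _ => 3*M)
    · filter_upwards with c
      apply Continuous.aestronglyMeasurable
      exact ((continuous_const.mul (hc.comp (continuous_mul_left c))).sub hc).abs
    · filter_upwards [Ioo_mem_nhds (show (1:ℝ)/2 < 1 by norm_num) (show (1:ℝ) < 2 by norm_num)]
        with c hc12
      rw [MeasureTheory.ae_restrict_iff' measurableSet_closedBall]
      filter_upwards with s hs
      have hs2 : |s| ≤ 2*R := by
        simpa [Real.dist_eq] using hs
      have hcs : |c * s| ≤ 4*R := by
        rw [abs_mul]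
        have h1 : |c| ≤ 2 := by
          rw [abs_le]; constructor <;> [linarith [hc12.1, hc12.2]; linarith [hc12.2]]
        nlinarith [abs_nonneg s, abs_nonneg c]
      have hgcs : |g (c*s)| ≤ M := hM (c*s)
        (Metric.mem_closedBall.2 (by rw [Real.dist_eq, sub_zero]; exact hcs))
      have hgs : |g s| ≤ M := hM s (by simp [Real.dist_eq]; linarith)
      have h2 : |c| ≤ 2 := by
        rw [abs_le]; constructor <;> [linarith [hc12.1, hc12.2]; linarith [hc12.2]]
      have : |(|c * g (c*s) - g s|)| ≤ 3*M := by
        rw [abs_abs]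
        calc |c * g (c*s) - g s| ≤ |c * g (c*s)| + |g s| := abs_sub _ _
        _ = |c| * |g (c*s)| + |g s| := by rw [abs_mul]
        _ ≤ 2*M + M := by nlinarith [abs_nonneg (g (c*s))]
        _ = 3*M := by ring
      exact this
    · exact integrableOn_const measure_closedBall_lt_top.ne
    · filter_upwards with s
      have : Continuous fun c : ℝ => |c * g (c*s) - g s| :=
        ((continuous_id.mul (hc.comp (continuous_mul_right s))).sub continuous_const).abs
      have ht := this.tendsto 1
      simpa using ht
  have hev1 : ∀ᶠ c : ℝ in 𝓝 1, (∫ s in K, |c * g (c*s) - g s|) < δ/2 := by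
    have := Metric.tendsto_nhds.mp hcompact (δ/2) (by linarith)
    filter_upwards [this] with c hc'
    rw [Real.dist_eq, sub_zero] at hc'
    exact lt_of_le_of_lt (le_abs_self _) hc'
  filter_upwards [hev1,
    Ioo_mem_nhds (show (1:ℝ)/2 < 1 by norm_num) (show (1:ℝ) < 2 by norm_num)] with c hcK hc12
  have hc0 : (0:ℝ) < c := by linarith [hc12.1]
  -- total integrable
  have hint : Integrable (fun s => |c * g (c*s) - g s|) := by
    exact (((hi.comp_mul_left' hc0.ne').const_mul c).sub hi).abs
  -- tail est
  have htail1 : (∫ s in Kᶜ, |c * g (c*s)|) < δ/8 := by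
    have hind : ∀ s, (Kᶜ).indicator (fun s => |c * g (c*s)|) s
        = c * ((Metric.closedBall (0:ℝ) (2*R*c))ᶜ.indicator (fun v => |g v|)) (c * s) := by
      intro s
      by_cases hs : s ∈ Kᶜ
      · have hcs : c * s ∈ (Metric.closedBall (0:ℝ) (2*R*c))ᶜ := by
          simp only [hK, mem_compl_iff, Metric.mem_closedBall, Real.dist_eq, sub_zero, not_le] at hs ⊢
          rw [abs_mul, abs_of_pos hc0, mul_comm (2*R) c]
          exact (mul_lt_mul_iff_right₀ hc0).2 hs
        rw [indicator_of_mem hs, indicator_of_mem hcs, abs_mul, abs_of_pos hc0]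
      · have hcs : c * s ∉ (Metric.closedBall (0:ℝ) (2*R*c))ᶜ := by
          simp only [hK, mem_compl_iff, Metric.mem_closedBall, Real.dist_eq, sub_zero, not_le,
            not_lt, not_not] at hs ⊢
          rw [abs_mul, abs_of_pos hc0, mul_comm (2*R) c]
          exact (mul_le_mul_iff_right₀ hc0).2 hs
        rw [indicator_of_notMem hs, indicator_of_notMem hcs, mul_zero]
    have hKm : MeasurableSet (Kᶜ) := measurableSet_closedBall.compl
    rw [← MeasureTheory.integral_indicator hKm]
    calc (∫ s, (Kᶜ).indicator (fun s => |c * g (c*s)|) s)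
        = ∫ s, c * ((Metric.closedBall (0:ℝ) (2*R*c))ᶜ.indicator (fun v => |g v|)) (c * s) := by
          exact integral_congr_ae (Filter.Eventually.of_forall hind)
    _ = c * ∫ s, ((Metric.closedBall (0:ℝ) (2*R*c))ᶜ.indicator (fun v => |g v|)) (c * s) :=
          by rw [integral_const_mul]
    _ = c * (|c⁻¹| • ∫ v, ((Metric.closedBall (0:ℝ) (2*R*c))ᶜ.indicator (fun v => |g v|)) v) := by
          rw [Measure.integral_comp_mul_left]
    _ = ∫ v in (Metric.closedBall (0:ℝ) (2*R*c))ᶜ, |g v| := by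
          rw [MeasureTheory.integral_indicator measurableSet_closedBall.compl]
          rw [abs_of_pos (inv_pos.2 hc0), smul_eq_mul]
          field_simp
    _ ≤ ∫ v in (Metric.closedBall (0:ℝ) R)ᶜ, |g v| := by
          apply setIntegral_mono_set hi.abs.integrableOn
          · exact Filter.Eventually.of_forall fun s => abs_nonneg _
          · apply HasSubset.Subset.eventuallyLE
            apply compl_subset_compl.2
            apply Metric.closedBall_subset_closedBall
            nlinarith [hc12.1, hR]
    _ < δ/8 := htail
  have htail2 : (∫ s in Kᶜ, |g s|) < δ/8 := by
    calc (∫ s in Kᶜ, |g s|) ≤ ∫ v in (Metric.closedBall (0:ℝ) R)ᶜ, |g v| := by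
          apply setIntegral_mono_set hi.abs.integrableOn
          · exact Filter.Eventually.of_forall fun s => abs_nonneg _
          · apply HasSubset.Subset.eventuallyLE
            apply compl_subset_compl.2
            exact Metric.closedBall_subset_closedBall (by linarith)
    _ < δ/8 := htail
  have htail3 : (∫ s in Kᶜ, |c * g (c*s) - g s|) ≤
      (∫ s in Kᶜ, |c * g (c*s)|) + ∫ s in Kᶜ, |g s| := by
    have h1 : Integrable (fun s => |c * g (c*s)|) :=
      ((hi.comp_mul_left' hc0.ne').const_mul c).abs
    rw [← integral_add h1.integrableOn hi.abs.integrableOn]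
    apply setIntegral_mono_on hint.integrableOn
      (h1.integrableOn.add hi.abs.integrableOn) measurableSet_closedBall.compl
    intro s _
    exact abs_sub _ _
  -- combine
  have hsplit := MeasureTheory.integral_add_compl
    (measurableSet_closedBall (x := (0:ℝ)) (ε := 2*R)) hint
  have hnn : 0 ≤ ∫ s, |c * g (c*s) - g s| := integral_nonneg fun s => abs_nonneg _
  rw [Real.dist_eq, sub_zero, abs_of_nonneg hnn]
  have : (∫ s, |c * g (c*s) - g s|) = (∫ s in K, |c * g (c*s) - g s|)
      + ∫ s in Kᶜ, |c * g (c*s) - g s| := hsplit.symm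
  rw [this]
  linarith

theorem deriv_wrt_scale (f μ : ℝ → ℝ)
    (hfmeas : Measurable f) (C : ℝ) (hbd : ∀ y, |f y| ≤ C)
    (hpos : ∀ ε, 0 < μ ε) (hC1 : ContDiff ℝ 1 μ)
    (hdensity : ∫ ε, μ ε = 1)
    (hint : Integrable (fun ε => ε * deriv μ ε))
    (htop : Tendsto (fun ε => ε * μ ε) atTop (nhds 0))
    (hbot : Tendsto (fun ε => ε * μ ε) atBot (nhds 0))
    (γ : ℝ) (hγ : 0 < γ) (x : ℝ) :
    HasDerivAt (fun γ : ℝ => ∫ ε, f (x + γ * ε) * μ ε)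
      (∫ ε, (f (x + γ * ε) * ((-1 + deriv (fun t => -Real.log (μ t)) ε * ε) / γ)) * μ ε) γ := by
  have hC0 : 0 ≤ C := le_trans (abs_nonneg _) (hbd 0)
  set G : ℝ → ℝ := fun ε => μ ε + ε * deriv μ ε with hGdef
  have hμcont : Continuous μ := hC1.continuous
  have hμ'cont : Continuous (deriv μ) := hC1.continuous_deriv le_rfl
  have hGcont : Continuous G := hμcont.add (continuous_id.mul hμ'cont)
  have hμint : Integrable μ := by
    by_contra h
    rw [MeasureTheory.integral_undef h] at hdensity
    norm_num at hdensity
  have hGint : Integrable G := hμint.add hint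
  have hμdiff : ∀ y : ℝ, HasDerivAt μ (deriv μ y) y :=
    fun y => ((hC1.differentiable one_ne_zero) y).hasDerivAt
  have hfb : ∃ C', ∀ u : ℝ, ‖f u‖ ≤ C' := ⟨C, fun u => by rw [Real.norm_eq_abs]; exact hbd u⟩
  -- derivative of the dilated kernel in the scale variable
  have hκderiv : ∀ (s t : ℝ), 0 < t →
      HasDerivAt (fun t => μ (s / t) / t) (-(G (s / t)) / t ^ 2) t := by
    intro s t ht
    have h1 : HasDerivAt (fun t : ℝ => s / t) (-(s / t ^ 2)) t := by
      simpa [div_eq_mul_inv, mul_comm, neg_div] using ((hasDerivAt_inv ht.ne').const_mul s)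
    have h2 := (hμdiff (s / t)).comp t h1
    have h3 : HasDerivAt (fun t : ℝ => t⁻¹) (-(t ^ 2)⁻¹) t := hasDerivAt_inv ht.ne'
    have h4 := h2.mul h3
    have heq : deriv μ (s / t) * -(s / t ^ 2) * t⁻¹ + μ (s / t) * -(t ^ 2)⁻¹
        = -(G (s / t)) / t ^ 2 := by
      rw [hGdef]
      field_simp
      ring
    have h4' : HasDerivAt (fun t : ℝ => μ (s / t) / t)
        (deriv μ (s / t) * -(s / t ^ 2) * t⁻¹ + μ (s / t) * -(t ^ 2)⁻¹) t := by
      simpa [Function.comp, div_eq_mul_inv] using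
        (show HasDerivAt (fun t : ℝ => μ (s / t) * t⁻¹) _ t from h4)
    rw [heq] at h4'
    exact h4'
  -- change of variables
  have M1 : ∀ (g : ℝ → ℝ) (t : ℝ), 0 < t →
      (∫ ε, f (x + t * ε) * g ε) = t⁻¹ * ∫ u, f u * g ((u - x) / t) := by
    intro g t ht
    have key : (fun ε => f (x + t * ε) * g ε)
        = fun ε => (fun u => f u * g ((u - x) / t)) (x + t * ε) := by
      funext ε
      simp only
      rw [add_sub_cancel_left, mul_div_cancel_left₀ _ ht.ne']
    rw [key, cov1 (fun u => f u * g ((u - x) / t)) x t, abs_of_pos (inv_pos.2 ht), smul_eq_mul]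
  have M2 : ∀ (g : ℝ → ℝ) (t : ℝ), 0 < t → (∫ u, g ((u - x) / t)) = t * ∫ v, g v := by
    intro g t ht
    rw [cov2 g x t, abs_of_pos ht, smul_eq_mul]
  -- integrability of dilated kernels
  have hIκ : ∀ t : ℝ, t ≠ 0 → Integrable (fun u => μ ((u - x) / t)) :=
    fun t ht => (hμint.comp_div ht).comp_sub_right x
  have hIG : ∀ t : ℝ, t ≠ 0 → Integrable (fun u => G ((u - x) / t)) :=
    fun t ht => (hGint.comp_div ht).comp_sub_right x
  have hIfκ : ∀ t : ℝ, t ≠ 0 → Integrable (fun u => f u * (μ ((u - x) / t) / t)) :=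
    fun t ht => (((hIκ t ht).div_const t)).bdd_mul hfmeas.aestronglyMeasurable
      (c := C) (Eventually.of_forall fun u => by rw [Real.norm_eq_abs]; exact hbd u)
  have hIfG : ∀ t : ℝ, t ≠ 0 → Integrable (fun u => f u * (-(G ((u - x) / t)) / t ^ 2)) :=
    fun t ht => (((hIG t ht).neg'.div_const (t ^ 2))).bdd_mul hfmeas.aestronglyMeasurable
      (c := C) (Eventually.of_forall fun u => by rw [Real.norm_eq_abs]; exact hbd u)
  set Ft : ℝ → ℝ := fun t => ∫ u, f u * (μ ((u - x) / t) / t) with hFtdef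
  set Dt : ℝ → ℝ := fun t => ∫ u, f u * (-(G ((u - x) / t)) / t ^ 2) with hDtdef
  -- Fubini identity
  have key2 : ∀ a b : ℝ, 0 < a → a ≤ b → Ft b - Ft a = ∫ t in a..b, Dt t := by
    intro a b ha hab
    have hb : 0 < b := lt_of_lt_of_le ha hab
    have hcont_t : ∀ u : ℝ, ContinuousOn (fun t => -(G ((u - x) / t)) / t ^ 2) (uIcc a b) := by
      intro u
      apply ContinuousOn.div
      · apply ContinuousOn.neg
        apply hGcont.comp_continuousOn
        apply ContinuousOn.div continuousOn_const continuousOn_id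
        intro t htm
        rw [uIcc_of_le hab] at htm
        exact (lt_of_lt_of_le ha htm.1).ne'
      · exact (continuous_pow 2).continuousOn
      · intro t htm
        rw [uIcc_of_le hab] at htm
        exact pow_ne_zero 2 (lt_of_lt_of_le ha htm.1).ne'
    have hFTC : ∀ u : ℝ, (∫ t in a..b, -(G ((u - x) / t)) / t ^ 2)
        = μ ((u - x) / b) / b - μ ((u - x) / a) / a := by
      intro u
      apply intervalIntegral.integral_eq_sub_of_hasDerivAt
      · intro t htm
        rw [uIcc_of_le hab] at htm
        exact hκderiv (u - x) t (lt_of_lt_of_le ha htm.1)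
      · exact (hcont_t u).intervalIntegrable
    -- product integrability
    have hmeas_meas : Measurable
        (Function.uncurry fun u t => f u * (-(G ((u - x) / t)) / t ^ 2)) := by
      apply Measurable.mul (hfmeas.comp measurable_fst)
      apply Measurable.div
      · exact (hGcont.measurable.comp
          ((measurable_fst.sub measurable_const).div measurable_snd)).neg
      · exact measurable_snd.pow_const 2
    have hmeas_prod : AEStronglyMeasurable
        (Function.uncurry fun u t => f u * (-(G ((u - x) / t)) / t ^ 2))
        (volume.prod (volume.restrict (Ioc a b))) :=
      hmeas_meas.aestronglyMeasurable
    have hprod : Integrable (Function.uncurry fun u t => f u * (-(G ((u - x) / t)) / t ^ 2))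
        (volume.prod (volume.restrict (Ioc a b))) := by
      rw [integrable_prod_iff' hmeas_prod]
      constructor
      · rw [ae_restrict_iff' measurableSet_Ioc]
        filter_upwards with t htm
        exact hIfG t (lt_of_lt_of_le ha htm.1.le).ne'
      · apply Integrable.mono' (g := fun _ => (C / a) * ∫ v, |G v|)
        · exact integrableOn_const measure_Ioc_lt_top.ne
        · exact (hmeas_meas.norm.stronglyMeasurable.integral_prod_left').aestronglyMeasurable
        · rw [ae_restrict_iff' measurableSet_Ioc]
          filter_upwards with t htm
          have ht : 0 < t := lt_of_lt_of_le ha htm.1.le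
          simp only [Function.uncurry, Real.norm_eq_abs]
          rw [abs_of_nonneg (integral_nonneg fun u => abs_nonneg _)]
          calc (∫ u, |f u * (-(G ((u - x) / t)) / t ^ 2)|)
              ≤ ∫ u, (C / t ^ 2) * |G ((u - x) / t)| := by
                apply integral_mono_of_nonneg
                · exact Eventually.of_forall fun u => abs_nonneg _
                · exact ((hIG t ht.ne').abs.const_mul _)
                · filter_upwards with u
                  calc |f u * (-(G ((u - x) / t)) / t ^ 2)|
                      = |f u| * |G ((u - x) / t)| / t ^ 2 := by
                        rw [abs_mul, abs_div, abs_neg,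
                          abs_of_nonneg (by positivity : (0:ℝ) ≤ t ^ 2)]
                        ring
                    _ ≤ C * |G ((u - x) / t)| / t ^ 2 := by
                        gcongr
                        exact hbd u
                    _ = (C / t ^ 2) * |G ((u - x) / t)| := by ring
              _ = (C / t ^ 2) * ∫ u, |G ((u - x) / t)| := integral_const_mul _ _
              _ = (C / t ^ 2) * (t * ∫ v, |G v|) := by
                rw [M2 (fun v => |G v|) t ht]
              _ ≤ (C / a) * ∫ v, |G v| := by
                have h1 : C / t ^ 2 * (t * ∫ v, |G v|) = (C / t) * ∫ v, |G v| := by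
                  field_simp
                rw [h1]
                apply mul_le_mul_of_nonneg_right ?_ (integral_nonneg fun v => abs_nonneg _)
                gcongr
                exact htm.1.le
    calc Ft b - Ft a
        = ∫ u, (f u * (μ ((u - x) / b) / b) - f u * (μ ((u - x) / a) / a)) :=
          (integral_sub (hIfκ b hb.ne') (hIfκ a ha.ne')).symm
      _ = ∫ u, f u * ∫ t in a..b, -(G ((u - x) / t)) / t ^ 2 := by
          apply integral_congr_ae
          filter_upwards with u
          rw [hFTC u]
          ring
      _ = ∫ u, ∫ t in a..b, f u * (-(G ((u - x) / t)) / t ^ 2) := by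
          apply integral_congr_ae
          filter_upwards with u
          rw [intervalIntegral.integral_const_mul]
      _ = ∫ u, ∫ t in Ioc a b, f u * (-(G ((u - x) / t)) / t ^ 2) := by
          apply integral_congr_ae
          filter_upwards with u
          rw [intervalIntegral.integral_of_le hab]
      _ = ∫ t in Ioc a b, ∫ u, f u * (-(G ((u - x) / t)) / t ^ 2) :=
          integral_integral_swap hprod
      _ = ∫ t in a..b, Dt t := by
          rw [intervalIntegral.integral_of_le hab]
  have key3 : ∀ t : ℝ, 0 < t → Ft t = Ft γ + ∫ τ in γ..t, Dt τ := by
    intro t ht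
    rcases le_total γ t with h | h
    · have h2 := key2 γ t hγ h
      linarith
    · have h2 := key2 t γ ht h
      rw [intervalIntegral.integral_symm]
      linarith
  -- continuity of Dt on (0, ∞)
  have hDcont : ∀ t₀ ∈ Ioi (0:ℝ), ContinuousAt Dt t₀ := by
    intro t₀ ht₀m
    simp only [mem_Ioi] at ht₀m
    have hAten : Tendsto (fun c : ℝ => ∫ s, |c * G (c * s) - G s|) (𝓝 1) (𝓝 0) :=
      dilation_tendsto G hGcont hGint
    set B : ℝ → ℝ := fun t =>
      C * t₀⁻¹ * ((t₀/t) * (∫ s, |(t₀/t) * G ((t₀/t) * s) - G s|)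
        + |t₀/t - 1| * ∫ v, |G v|) with hBdef
    have hct : Tendsto (fun t : ℝ => t₀ / t) (𝓝 t₀) (𝓝 1) := by
      have := Filter.Tendsto.div (tendsto_const_nhds (x := t₀)) tendsto_id ht₀m.ne'
      simpa [div_self ht₀m.ne'] using
        (show Tendsto (fun t : ℝ => t₀ / t) (𝓝 t₀) (𝓝 (t₀ / t₀)) from this)
    have hBten : Tendsto B (𝓝 t₀) (𝓝 0) := by
      have h1 : Tendsto (fun t : ℝ => (t₀/t) * (∫ s, |(t₀/t) * G ((t₀/t) * s) - G s|))
          (𝓝 t₀) (𝓝 (1 * 0)) := hct.mul (hAten.comp hct)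
      have h2 : Tendsto (fun t : ℝ => |t₀/t - 1| * ∫ v, |G v|)
          (𝓝 t₀) (𝓝 (|1 - 1| * ∫ v, |G v|)) := ((hct.sub_const 1).abs).mul_const _
      have h3 := (h1.add h2).const_mul (C * t₀⁻¹)
      simpa using h3
    have hbound : ∀ᶠ t in 𝓝 t₀, |Dt t - Dt t₀| ≤ B t := by
      filter_upwards [Ioi_mem_nhds ht₀m] with t htm
      have ht : (0:ℝ) < t := htm
      set c : ℝ := t₀ / t with hcdef
      have hc0 : 0 < c := div_pos ht₀m ht
      have hIdiff : Integrable (fun u =>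
          f u * (-(G ((u - x) / t)) / t ^ 2) - f u * (-(G ((u - x) / t₀)) / t₀ ^ 2)) :=
        (hIfG t ht.ne').sub (hIfG t₀ ht₀m.ne')
      have step1 : |Dt t - Dt t₀| ≤
          ∫ u, |f u * (-(G ((u - x) / t)) / t ^ 2) - f u * (-(G ((u - x) / t₀)) / t₀ ^ 2)| := by
        rw [hDtdef]
        simp only
        rw [← integral_sub (hIfG t ht.ne') (hIfG t₀ ht₀m.ne')]
        have := norm_integral_le_integral_norm (μ := volume) (fun u =>
          f u * (-(G ((u - x) / t)) / t ^ 2) - f u * (-(G ((u - x) / t₀)) / t₀ ^ 2))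
        simpa [Real.norm_eq_abs] using this
      have step2 : (∫ u, |f u * (-(G ((u - x) / t)) / t ^ 2)
            - f u * (-(G ((u - x) / t₀)) / t₀ ^ 2)|)
          ≤ C * ∫ u, |(G ((u - x) / t)) / t ^ 2 - (G ((u - x) / t₀)) / t₀ ^ 2| := by
        rw [← integral_const_mul]
        apply integral_mono_of_nonneg (Eventually.of_forall fun u => abs_nonneg _)
        · apply Integrable.const_mul
          exact (((hIG t ht.ne').div_const _).sub ((hIG t₀ ht₀m.ne').div_const _)).abs
        · filter_upwards with u
          have : f u * (-(G ((u - x) / t)) / t ^ 2) - f u * (-(G ((u - x) / t₀)) / t₀ ^ 2)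
              = (- f u) * ((G ((u - x) / t)) / t ^ 2 - (G ((u - x) / t₀)) / t₀ ^ 2) := by
            ring
          rw [this, abs_mul, abs_neg]
          exact mul_le_mul_of_nonneg_right (hbd u) (abs_nonneg _)
      have hcov : (∫ u, |(G ((u - x) / t)) / t ^ 2 - (G ((u - x) / t₀)) / t₀ ^ 2|)
          = t₀ * ∫ s, |(G ((t₀ * s) / t)) / t ^ 2 - (G s) / t₀ ^ 2| := by
        have h1 := cov1 (fun u => |(G ((u - x) / t)) / t ^ 2 - (G ((u - x) / t₀)) / t₀ ^ 2|) x t₀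
        rw [abs_of_pos (inv_pos.2 ht₀m), smul_eq_mul] at h1
        have h2 : (fun ε : ℝ => |(G ((x + t₀ * ε - x) / t)) / t ^ 2
            - (G ((x + t₀ * ε - x) / t₀)) / t₀ ^ 2|)
            = fun s : ℝ => |(G ((t₀ * s) / t)) / t ^ 2 - (G s) / t₀ ^ 2| := by
          funext s
          rw [add_sub_cancel_left, mul_div_cancel_left₀ _ ht₀m.ne']
        rw [h2] at h1
        rw [h1, ← mul_assoc, mul_inv_cancel₀ ht₀m.ne', one_mul]
      have hptw : ∀ s : ℝ, |(G ((t₀ * s) / t)) / t ^ 2 - (G s) / t₀ ^ 2|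
          = t₀⁻¹ * t₀⁻¹ * |c * c * G (c * s) - G s| := by
        intro s
        have h1 : (t₀ * s) / t = c * s := by
          rw [hcdef]; field_simp
        have h2 : (G ((t₀ * s) / t)) / t ^ 2 - (G s) / t₀ ^ 2
            = t₀⁻¹ * t₀⁻¹ * (c * c * G (c * s) - G s) := by
          rw [h1, hcdef]
          field_simp
        rw [h2, abs_mul, abs_mul, abs_of_pos (inv_pos.2 ht₀m)]
      have htri : (∫ s, |c * c * G (c * s) - G s|)
          ≤ c * (∫ s, |c * G (c * s) - G s|) + |c - 1| * ∫ v, |G v| := by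
        have hInt1 : Integrable (fun s => c * |c * G (c * s) - G s|) :=
          (((hGint.comp_mul_left' hc0.ne').const_mul c).sub hGint).abs.const_mul c
        have hInt2 : Integrable (fun s => |c - 1| * |G s|) := hGint.abs.const_mul _
        calc (∫ s, |c * c * G (c * s) - G s|)
            ≤ ∫ s, (c * |c * G (c * s) - G s| + |c - 1| * |G s|) := by
              apply integral_mono_of_nonneg (Eventually.of_forall fun s => abs_nonneg _)
                (hInt1.add hInt2)
              filter_upwards with s
              have : c * c * G (c * s) - G s
                  = c * (c * G (c * s) - G s) + (c - 1) * G s := by ring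
              rw [this]
              calc |c * (c * G (c * s) - G s) + (c - 1) * G s|
                  ≤ |c * (c * G (c * s) - G s)| + |(c - 1) * G s| := abs_add_le _ _
                _ = c * |c * G (c * s) - G s| + |c - 1| * |G s| := by
                    rw [abs_mul, abs_mul, abs_of_pos hc0]
          _ = c * (∫ s, |c * G (c * s) - G s|) + |c - 1| * ∫ v, |G v| := by
              rw [integral_add hInt1 hInt2, integral_const_mul, integral_const_mul]
      calc |Dt t - Dt t₀|
          ≤ ∫ u, |f u * (-(G ((u - x) / t)) / t ^ 2)
              - f u * (-(G ((u - x) / t₀)) / t₀ ^ 2)| := step1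
        _ ≤ C * ∫ u, |(G ((u - x) / t)) / t ^ 2 - (G ((u - x) / t₀)) / t₀ ^ 2| := step2
        _ = C * (t₀ * ∫ s, |(G ((t₀ * s) / t)) / t ^ 2 - (G s) / t₀ ^ 2|) := by rw [hcov]
        _ = C * t₀⁻¹ * ∫ s, |c * c * G (c * s) - G s| := by
            rw [funext hptw, integral_const_mul]
            field_simp
        _ ≤ C * t₀⁻¹ * (c * (∫ s, |c * G (c * s) - G s|) + |c - 1| * ∫ v, |G v|) := by
            apply mul_le_mul_of_nonneg_left htri (by positivity)
        _ = B t := by rw [hBdef]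
    have h0 : Tendsto (fun t => |Dt t - Dt t₀|) (𝓝 t₀) (𝓝 0) :=
      squeeze_zero' (Eventually.of_forall fun t => abs_nonneg _) hbound hBten
    have : Tendsto Dt (𝓝 t₀) (𝓝 (Dt t₀)) := by
      rw [tendsto_iff_dist_tendsto_zero]
      simpa [Real.dist_eq] using h0
    exact this
  -- derivative of Ft
  have hFtderiv : HasDerivAt Ft (Dt γ) γ := by
    have hmeasAt : StronglyMeasurableAtFilter Dt (𝓝 γ) volume :=
      ContinuousAt.stronglyMeasurableAtFilter isOpen_Ioi hDcont γ hγ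
    have hkey := intervalIntegral.integral_hasDerivAt_right
      (IntervalIntegrable.refl) hmeasAt (hDcont γ hγ)
    have heq : (fun t => Ft γ + ∫ τ in γ..t, Dt τ) =ᶠ[𝓝 γ] Ft := by
      filter_upwards [Ioi_mem_nhds hγ] with t ht
      exact (key3 t ht).symm
    exact ((hkey.const_add (Ft γ)).congr_of_eventuallyEq heq.symm)
  -- transfer to the original function
  have heq2 : (fun t : ℝ => ∫ ε, f (x + t * ε) * μ ε) =ᶠ[𝓝 γ] Ft := by
    filter_upwards [Ioi_mem_nhds hγ] with t ht
    rw [M1 μ t ht, hFtdef]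
    simp only
    rw [← integral_const_mul]
    apply integral_congr_ae
    filter_upwards with u
    ring
  have hmain : HasDerivAt (fun t : ℝ => ∫ ε, f (x + t * ε) * μ ε) (Dt γ) γ :=
    hFtderiv.congr_of_eventuallyEq heq2
  -- identify the derivative value
  have hlogderiv : ∀ ε, deriv (fun t => -Real.log (μ t)) ε = -(deriv μ ε / μ ε) := by
    intro ε
    exact (((hμdiff ε).log (hpos ε).ne').neg).deriv
  have hvalue : (∫ ε, (f (x + γ * ε) * ((-1 + deriv (fun t => -Real.log (μ t)) ε * ε) / γ)) * μ ε)
      = Dt γ := by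
    have h1 : ∀ ε, (f (x + γ * ε) * ((-1 + deriv (fun t => -Real.log (μ t)) ε * ε) / γ)) * μ ε
        = f (x + γ * ε) * (-(G ε) / γ) := by
      intro ε
      rw [hlogderiv ε, hGdef]
      have hμε : μ ε ≠ 0 := (hpos ε).ne'
      field_simp
      ring
    calc (∫ ε, (f (x + γ * ε) * ((-1 + deriv (fun t => -Real.log (μ t)) ε * ε) / γ)) * μ ε)
        = ∫ ε, f (x + γ * ε) * (-(G ε) / γ) := integral_congr_ae (Eventually.of_forall h1)
      _ = γ⁻¹ * ∫ u, f u * (-(G ((u - x) / γ)) / γ) := M1 (fun ε => -(G ε) / γ) γ hγ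
      _ = Dt γ := by
        rw [hDtdef]
        simp only
        rw [← integral_const_mul]
        apply integral_congr_ae
        filter_upwards with u
        ring
  rw [hvalue]
  exact hmain
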